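/- For any real N×N matrix a that is entrywise non-negative and irreducible (in the sense that for all indices i,j there is m ≥ 1 with (a^m)_{ij} > 0), the spectral radius r(a) is an eigenvalue of a that is positive, simple, and admits a strictly positive eigenvector. -/

import Mathlib

/-!
Irreducibility makes `B = 1 + A + ⋯ + A ^ K` entrywise positive for some `K`, and `B` commutes
with `A`. Bounding `tr (A ^ s)` by `N ρ ^ s` through the eigenvalues, the positivity of `B` shows
that `t • v ≤ A v` for a nonzero `v ≥ 0` forces `t ≤ ρ`, strictly unless `v` is an eigenvector
(applying `B` creates slack). For an eigenvector `z` of an eigenvalue of modulus `ρ` the triangle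
inequality gives `ρ |z| ≤ A |z|`, hence `A |z| = ρ |z|`, and `B |z| > 0` shows `|z| > 0`; the
same for `Aᵀ` gives a positive left eigenvector `w`. The `ρ`-eigenspace is a line (subtract from
an eigenvector the largest multiple of `|z|` keeping it nonnegative), and since `w` kills the
range of `A - ρ`, every generalized eigenvector is an eigenvector. So the algebraic multiplicity,
the dimension of the generalized eigenspace, is `1`.
-/

open Matrix Finset Module Filter Topology

namespace Module.End

variable {R M : Type*} [CommRing R] [AddCommGroup M] [Module R M]

theorem maxGenEigenspace_eq_eigenspace_of_dual {f : End R M} {μ : R} (φ : M →ₗ[R] R)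
    (hφ : ∀ x, φ (f x) = μ * φ x) (hφ_inj : ∀ x ∈ f.eigenspace μ, φ x = 0 → x = 0) :
    f.maxGenEigenspace μ = f.eigenspace μ := by
  refine le_antisymm (fun x hx => ?_) eigenspace_le_maxGenEigenspace
  obtain ⟨k, hk⟩ := (mem_maxGenEigenspace f μ x).1 hx
  induction k generalizing x with
  | zero => simp_all
  | succ k ih =>
    rw [pow_succ, Module.End.mul_apply] at hk
    have hy := ih _ ((mem_maxGenEigenspace f μ _).2 ⟨k, hk⟩) hk
    have hφy : φ ((f - μ • 1) x) = 0 := by simp [hφ]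
    rw [mem_eigenspace_iff, ← sub_eq_zero]
    simpa using hφ_inj _ hy hφy

end Module.End

theorem le_of_forall_mul_pow_le {a C t ρ : ℝ} (ha : 0 < a) (hρ : 0 ≤ ρ)
    (h : ∀ m : ℕ, a * t ^ m ≤ C * ρ ^ m) : t ≤ ρ := by
  by_contra! hlt
  have ht : 0 < t := hρ.trans_lt hlt
  have hlim : Tendsto (fun m : ℕ => C * (ρ / t) ^ m) atTop (𝓝 0) := by
    simpa using (tendsto_pow_atTop_nhds_zero_of_lt_one (div_nonneg hρ ht.le)
      ((div_lt_one ht).2 hlt)).const_mul C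
  obtain ⟨m, hm⟩ := (hlim.eventually_lt_const ha).exists
  have ha' : a ≤ C * (ρ / t) ^ m := by
    rw [div_pow, ← mul_div_assoc, le_div_iff₀ (pow_pos ht m)]
    exact h m
  linarith

theorem exists_pos_smul_le {ι : Type*} [Finite ι] (u : ι → ℝ) {w : ι → ℝ}
    (hw : ∀ i, 0 < w i) : ∃ ε : ℝ, 0 < ε ∧ ε • u ≤ w := by
  have hev : ∀ᶠ ε in 𝓝[>] (0 : ℝ), ∀ i, ε * u i < w i :=
    eventually_all.2 fun i => nhdsWithin_le_nhds <|
      ((continuous_id.mul continuous_const).tendsto' 0 0 (by simp)).eventually (gt_mem_nhds (hw i))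
  obtain ⟨ε, hεw, hε⟩ := (hev.and self_mem_nhdsWithin).exists
  exact ⟨ε, hε, fun i => (hεw i).le⟩

namespace Matrix

variable {n : Type*} [Fintype n]

theorem mulVec_mono {m : Type*} {B : Matrix m n ℝ} (hB : ∀ i j, 0 ≤ B i j) {v w : n → ℝ}
    (h : v ≤ w) : B *ᵥ v ≤ B *ᵥ w :=
  fun i => sum_le_sum fun j _ => mul_le_mul_of_nonneg_left (h j) (hB i j)

theorem mulVec_pos {m : Type*} {B : Matrix m n ℝ} (hB : ∀ i j, 0 < B i j) {v : n → ℝ}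
    (hv : 0 ≤ v) (hv0 : v ≠ 0) (i : m) : 0 < (B *ᵥ v) i := by
  obtain ⟨j, hj⟩ := Function.ne_iff.1 hv0
  exact sum_pos' (fun k _ => mul_nonneg (hB i k).le (hv k))
    ⟨j, mem_univ j, mul_pos (hB i j) ((hv j).lt_of_ne' hj)⟩

theorem norm_map_ofReal_mulVec_le {m : Type*} {A : Matrix m n ℝ} (hA : ∀ i j, 0 ≤ A i j)
    (z : n → ℂ) (i : m) :
    ‖(A.map Complex.ofReal *ᵥ z) i‖ ≤ (A *ᵥ fun j => ‖z j‖) i := by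
  refine (norm_sum_le _ _).trans_eq (sum_congr rfl fun j _ => ?_)
  simp only [norm_mul, map_apply, Complex.norm_real, Real.norm_of_nonneg (hA i j)]

variable [DecidableEq n]

theorem spectrum_transpose {R : Type*} [CommRing R] (M : Matrix n n R) :
    spectrum R Mᵀ = spectrum R M := by
  ext r
  simp only [mem_spectrum_iff_not_isUnit_eval_charpoly, charpoly_transpose]

theorem exists_mem_spectrum_forall_norm_le [Nonempty n] (M : Matrix n n ℂ) :
    ∃ r ∈ spectrum ℂ M, ∀ μ ∈ spectrum ℂ M, ‖μ‖ ≤ ‖r‖ :=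
  Set.exists_max_image _ _ M.finite_spectrum
    (spectrum.nonempty_of_isAlgClosed_of_finiteDimensional ℂ M)

theorem norm_trace_pow_le {M : Matrix n n ℂ} {ρ : ℝ} (hρ0 : 0 ≤ ρ)
    (hρ : ∀ μ ∈ spectrum ℂ M, ‖μ‖ ≤ ρ) (s : ℕ) :
    ‖(M ^ s).trace‖ ≤ Fintype.card n * ρ ^ s := by
  rcases s.eq_zero_or_pos with rfl | hs
  · simp
  have hroots : ∀ x ∈ (M ^ s).charpoly.roots.map (‖·‖), x ≤ ρ ^ s := by
    simp only [Multiset.mem_map, Polynomial.mem_roots', forall_exists_index, and_imp]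
    rintro x μ - hμ rfl
    rw [← mem_spectrum_iff_isRoot_charpoly, spectrum.map_pow_of_pos M hs] at hμ
    obtain ⟨ν, hν, rfl⟩ := hμ
    rw [norm_pow]
    exact pow_le_pow_left₀ (norm_nonneg _) (hρ ν hν) s
  calc ‖(M ^ s).trace‖ = ‖(M ^ s).charpoly.roots.sum‖ := by rw [trace_eq_sum_roots_charpoly]
    _ ≤ ((M ^ s).charpoly.roots.map (‖·‖)).sum := norm_multiset_sum_le _
    _ ≤ ((M ^ s).charpoly.roots.map (‖·‖)).card • ρ ^ s := Multiset.sum_le_card_nsmul _ _ hroots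
    _ ≤ Fintype.card n * ρ ^ s := by
        rw [Multiset.card_map, nsmul_eq_mul, ← charpoly_natDegree_eq_dim (M ^ s)]
        gcongr
        exact_mod_cast Polynomial.card_roots' _

theorem trace_pow_le {A : Matrix n n ℝ} {ρ : ℝ} (hρ0 : 0 ≤ ρ)
    (hρ : ∀ μ ∈ spectrum ℂ (A.map Complex.ofReal), ‖μ‖ ≤ ρ) (s : ℕ) :
    (A ^ s).trace ≤ Fintype.card n * ρ ^ s := by
  have h := norm_trace_pow_le hρ0 hρ s
  rw [show A.map Complex.ofReal = A.map Complex.ofRealHom from rfl, ← Matrix.map_pow,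
    ← AddMonoidHom.map_trace Complex.ofRealHom, Complex.ofRealHom_eq_coe, Complex.norm_real,
    Real.norm_eq_abs] at h
  exact (le_abs_self _).trans h

section Nonneg

variable {A : Matrix n n ℝ}

theorem pow_smul_le_pow_mulVec (hA : ∀ i j, 0 ≤ A i j) {t : ℝ} (ht : 0 ≤ t) {v : n → ℝ}
    (h : t • v ≤ A *ᵥ v) (m : ℕ) : t ^ m • v ≤ (A ^ m) *ᵥ v := by
  induction m with
  | zero => simp
  | succ m ih =>
    calc t ^ (m + 1) • v = t ^ m • (t • v) := by rw [pow_succ, mul_smul]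
      _ ≤ t ^ m • (A *ᵥ v) := smul_le_smul_of_nonneg_left h (pow_nonneg ht m)
      _ = A *ᵥ (t ^ m • v) := (mulVec_smul A _ v).symm
      _ ≤ A *ᵥ ((A ^ m) *ᵥ v) := mulVec_mono hA ih
      _ = (A ^ (m + 1)) *ᵥ v := by rw [mulVec_mulVec, pow_succ']

theorem pow_mulVec_eq_pow_smul {c : ℝ} {v : n → ℝ} (h : A *ᵥ v = c • v) (m : ℕ) :
    (A ^ m) *ᵥ v = c ^ m • v := by
  induction m with
  | zero => simp
  | succ m ih => rw [pow_succ', ← mulVec_mulVec, ih, mulVec_smul, h, smul_smul, pow_succ]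

theorem exists_sum_pow_pos (hA : ∀ i j, 0 ≤ A i j) (hirr : ∀ i j, ∃ m, 0 < (A ^ m) i j) :
    ∃ K, ∀ i j, 0 < (∑ k ∈ range K, A ^ k) i j := by
  choose m hm using hirr
  refine ⟨univ.sup (fun p : n × n => m p.1 p.2) + 1, fun i j => ?_⟩
  rw [Matrix.sum_apply]
  refine sum_pos' (fun k _ => pow_apply_nonneg hA k i j) ⟨m i j, ?_, hm i j⟩
  exact mem_range.2 (Nat.lt_succ_of_le (le_sup (f := fun p : n × n => m p.1 p.2) (mem_univ (i, j))))

theorem trace_pow_mul_sum_pow_le {ρ : ℝ} (hρ0 : 0 ≤ ρ)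
    (hρ : ∀ μ ∈ spectrum ℂ (A.map Complex.ofReal), ‖μ‖ ≤ ρ) (m K : ℕ) :
    (A ^ m * ∑ k ∈ range K, A ^ k).trace ≤ Fintype.card n * (∑ k ∈ range K, ρ ^ k) * ρ ^ m := by
  calc (A ^ m * ∑ k ∈ range K, A ^ k).trace = ∑ k ∈ range K, (A ^ (m + k)).trace := by
        simp only [Matrix.mul_sum, trace_sum, pow_add]
    _ ≤ ∑ k ∈ range K, Fintype.card n * ρ ^ (m + k) :=
        sum_le_sum fun k _ => trace_pow_le hρ0 hρ (m + k)
    _ = Fintype.card n * (∑ k ∈ range K, ρ ^ k) * ρ ^ m := by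
        simp only [Finset.mul_sum, Finset.sum_mul, pow_add]
        exact sum_congr rfl fun k _ => by ring

theorem le_of_smul_le_mulVec (hA : ∀ i j, 0 ≤ A i j) (hirr : ∀ i j, ∃ m, 0 < (A ^ m) i j)
    {ρ : ℝ} (hρ0 : 0 ≤ ρ) (hρ : ∀ μ ∈ spectrum ℂ (A.map Complex.ofReal), ‖μ‖ ≤ ρ)
    {v : n → ℝ} (hv : 0 ≤ v) (hv0 : v ≠ 0) {t : ℝ} (ht : t • v ≤ A *ᵥ v) : t ≤ ρ := by
  rcases le_or_gt t 0 with ht0 | ht0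
  · exact ht0.trans hρ0
  obtain ⟨K, hK⟩ := exists_sum_pow_pos hA hirr
  set B := ∑ k ∈ range K, A ^ k
  obtain ⟨j, hj⟩ := Function.ne_iff.1 hv0
  set c := ∑ l, v l / B l j
  have hc : 0 ≤ c := sum_nonneg fun l _ => div_nonneg (hv l) (hK l j).le
  have hvc : v ≤ c • fun l => B l j := fun l => by
    have : v l / B l j ≤ c :=
      single_le_sum (f := fun l => v l / B l j) (fun l _ => div_nonneg (hv l) (hK l j).le)
        (mem_univ l)
    simpa [← div_le_iff₀ (hK l j)]
  -- `v ≤ c • B e_j`, so `t ^ m v_j ≤ c (A ^ m B)_jj ≤ c tr (A ^ m B)`, which grows like `ρ ^ m`.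
  refine le_of_forall_mul_pow_le (C := c * (Fintype.card n * ∑ k ∈ range K, ρ ^ k))
    ((hv j).lt_of_ne' hj) hρ0 fun m => ?_
  calc v j * t ^ m = (t ^ m • v) j := by simp [mul_comm]
    _ ≤ ((A ^ m) *ᵥ v) j := pow_smul_le_pow_mulVec hA ht0.le ht m j
    _ ≤ ((A ^ m) *ᵥ (c • fun l => B l j)) j := mulVec_mono (pow_apply_nonneg hA m) hvc j
    _ = c * (A ^ m * B) j j := by rw [mulVec_smul, Pi.smul_apply, smul_eq_mul]; rfl
    _ ≤ c * (A ^ m * B).trace := by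
        refine mul_le_mul_of_nonneg_left (single_le_sum (f := fun i => (A ^ m * B) i i)
          (fun i _ => ?_) (mem_univ j)) hc
        exact sum_nonneg fun l _ => mul_nonneg (pow_apply_nonneg hA m i l) (hK l i).le
    _ ≤ c * (Fintype.card n * ∑ k ∈ range K, ρ ^ k) * ρ ^ m := by
        rw [mul_assoc]; exact mul_le_mul_of_nonneg_left (trace_pow_mul_sum_pow_le hρ0 hρ m K) hc

theorem lt_of_smul_le_mulVec_of_ne (hA : ∀ i j, 0 ≤ A i j)
    (hirr : ∀ i j, ∃ m, 0 < (A ^ m) i j) {ρ : ℝ} (hρ0 : 0 ≤ ρ)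
    (hρ : ∀ μ ∈ spectrum ℂ (A.map Complex.ofReal), ‖μ‖ ≤ ρ)
    {v : n → ℝ} (hv : 0 ≤ v) (hv0 : v ≠ 0) {t : ℝ} (ht : t • v ≤ A *ᵥ v)
    (hne : t • v ≠ A *ᵥ v) : t < ρ := by
  obtain ⟨K, hK⟩ := exists_sum_pow_pos hA hirr
  set B := ∑ k ∈ range K, A ^ k
  have hBA : A * B = B * A := (Commute.sum_right _ _ _ fun k _ => Commute.self_pow A k).eq
  have hu := mulVec_pos hK hv hv0
  obtain ⟨ε, hε, hεu⟩ := exists_pos_smul_le (B *ᵥ v)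
    (mulVec_pos hK (sub_nonneg.2 ht) (sub_ne_zero.2 hne.symm))
  have hAu : (t + ε) • (B *ᵥ v) ≤ A *ᵥ (B *ᵥ v) := by
    have : A *ᵥ (B *ᵥ v) = t • (B *ᵥ v) + B *ᵥ (A *ᵥ v - t • v) := by
      rw [mulVec_sub, mulVec_smul, mulVec_mulVec, hBA, ← mulVec_mulVec, add_sub_cancel]
    rw [this, add_smul]
    exact add_le_add_right hεu _
  have hu0 : B *ᵥ v ≠ 0 := by
    obtain ⟨j, -⟩ := Function.ne_iff.1 hv0
    exact Function.ne_iff.2 ⟨j, (hu j).ne'⟩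
  linarith [le_of_smul_le_mulVec hA hirr hρ0 hρ (fun i => (hu i).le) hu0 hAu]

theorem pos_of_nonneg_of_mulVec_eq_smul (hA : ∀ i j, 0 ≤ A i j) (hirr : ∀ i j, ∃ m, 0 < (A ^ m) i j)
    {c : ℝ} {x : n → ℝ} (hx : 0 ≤ x) (hx0 : x ≠ 0) (hAx : A *ᵥ x = c • x) (i : n) :
    0 < x i := by
  obtain ⟨K, hK⟩ := exists_sum_pow_pos hA hirr
  have hpos := mulVec_pos hK hx hx0 i
  rw [sum_mulVec, Finset.sum_apply] at hpos
  simp only [pow_mulVec_eq_pow_smul hAx, Pi.smul_apply, smul_eq_mul, ← Finset.sum_mul] at hpos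
  exact ((pos_and_pos_or_neg_and_neg_of_mul_pos hpos).resolve_right
    fun h => (hx i).not_gt h.2).2

theorem exists_pos_eigenvector (hA : ∀ i j, 0 ≤ A i j) (hirr : ∀ i j, ∃ m, 0 < (A ^ m) i j)
    {r : ℂ} (hr : r ∈ spectrum ℂ (A.map Complex.ofReal))
    (hmax : ∀ μ ∈ spectrum ℂ (A.map Complex.ofReal), ‖μ‖ ≤ ‖r‖) :
    ∃ u : n → ℝ, (∀ i, 0 < u i) ∧ A *ᵥ u = ‖r‖ • u := by
  rw [← spectrum_toLin'] at hr
  obtain ⟨z, hz, hz0⟩ := (Module.End.hasEigenvalue_iff_mem_spectrum.2 hr).exists_hasEigenvector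
  rw [Module.End.mem_eigenspace_iff, toLin'_apply] at hz
  set x : n → ℝ := fun j => ‖z j‖
  have hx : 0 ≤ x := fun j => norm_nonneg _
  have hx0 : x ≠ 0 := fun h => hz0 (funext fun j => norm_eq_zero.1 (congrFun h j))
  have hle : ‖r‖ • x ≤ A *ᵥ x := fun i => by
    simpa [hz, x] using norm_map_ofReal_mulVec_le hA z i
  have heq : A *ᵥ x = ‖r‖ • x := by
    by_contra h
    exact (lt_of_smul_le_mulVec_of_ne hA hirr (norm_nonneg r) hmax hx hx0 hle (Ne.symm h)).false
  exact ⟨x, pos_of_nonneg_of_mulVec_eq_smul hA hirr hx hx0 heq, heq⟩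

theorem pos_of_forall_pos_of_mulVec_eq_smul [Nonempty n] (hA : ∀ i j, 0 ≤ A i j)
    (hirr : ∀ i j, ∃ m, 1 ≤ m ∧ 0 < (A ^ m) i j) {ρ : ℝ} {u : n → ℝ} (hu : ∀ i, 0 < u i)
    (hAu : A *ᵥ u = ρ • u) : 0 < ρ := by
  obtain ⟨i, j, hij⟩ : ∃ i j, A i j ≠ 0 := by
    by_contra! h
    obtain ⟨m, hm1, hm⟩ := hirr (Classical.arbitrary n) (Classical.arbitrary n)
    rw [show A = 0 from Matrix.ext h, zero_pow (by omega)] at hm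
    exact hm.false
  have hpos : 0 < (A *ᵥ u) i :=
    sum_pos' (fun k _ => mul_nonneg (hA i k) (hu k).le)
      ⟨j, mem_univ j, mul_pos ((hA i j).lt_of_ne' hij) (hu j)⟩
  rw [hAu, Pi.smul_apply, smul_eq_mul] at hpos
  exact pos_of_mul_pos_left hpos (hu i).le

theorem exists_eq_smul_of_mulVec_eq_smul (hA : ∀ i j, 0 ≤ A i j)
    (hirr : ∀ i j, ∃ m, 0 < (A ^ m) i j) {ρ : ℝ} {u v : n → ℝ} (hu : ∀ i, 0 < u i)
    (hAu : A *ᵥ u = ρ • u) (hAv : A *ᵥ v = ρ • v) : ∃ c : ℝ, v = c • u := by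
  cases isEmpty_or_nonempty n
  · exact ⟨0, Subsingleton.elim _ _⟩
  obtain ⟨i₀, hi₀⟩ := Finite.exists_min fun i => v i / u i
  refine ⟨v i₀ / u i₀, ?_⟩
  set y := v - (v i₀ / u i₀) • u
  have hy : 0 ≤ y := fun i => by
    have := (le_div_iff₀ (hu i)).1 (hi₀ i)
    simpa [y, sub_nonneg] using this
  have hyi₀ : y i₀ = 0 := by simp [y, div_mul_cancel₀ _ (hu i₀).ne']
  have hAy : A *ᵥ y = ρ • y := by
    rw [mulVec_sub, mulVec_smul, hAu, hAv, smul_sub, smul_comm]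
  by_contra hne
  exact (pos_of_nonneg_of_mulVec_eq_smul hA hirr hy (sub_ne_zero.2 hne) hAy i₀).ne' hyi₀

theorem ofReal_mem_spectrum_map {c : ℝ} {v : n → ℝ} (hv : v ≠ 0) (hAv : A *ᵥ v = c • v) :
    (c : ℂ) ∈ spectrum ℂ (A.map Complex.ofReal) := by
  have hc : c ∈ spectrum ℝ A := by
    rw [← spectrum_toLin']
    exact Module.End.HasEigenvalue.mem_spectrum (Module.End.hasEigenvalue_of_hasEigenvector
      ⟨Module.End.mem_eigenspace_iff.2 (by rwa [toLin'_apply]), hv⟩)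
  rw [mem_spectrum_iff_isRoot_charpoly] at hc ⊢
  exact (charpoly_map A Complex.ofRealHom) ▸ hc.map

theorem rootMultiplicity_charpoly_eq_one [Nonempty n] (hA : ∀ i j, 0 ≤ A i j)
    (hirr : ∀ i j, ∃ m, 0 < (A ^ m) i j) {ρ : ℝ} {u w : n → ℝ} (hu : ∀ i, 0 < u i)
    (hAu : A *ᵥ u = ρ • u) (hw : ∀ i, 0 < w i) (hwA : w ᵥ* A = ρ • w) :
    A.charpoly.rootMultiplicity ρ = 1 := by
  have hu0 : u ≠ 0 := Function.ne_iff.2 ⟨Classical.arbitrary n, (hu _).ne'⟩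
  have hspan : Module.End.eigenspace (toLin' A) ρ = ℝ ∙ u := by
    ext v
    rw [Module.End.mem_eigenspace_iff, toLin'_apply, Submodule.mem_span_singleton]
    constructor
    · intro hAv
      obtain ⟨c, rfl⟩ := exists_eq_smul_of_mulVec_eq_smul hA hirr hu hAu hAv
      exact ⟨c, rfl⟩
    · rintro ⟨c, rfl⟩
      rw [mulVec_smul, hAu, smul_comm]
  have hwu : 0 < w ⬝ᵥ u := sum_pos (fun i _ => mul_pos (hw i) (hu i)) univ_nonempty
  rw [← charpoly_toLin', ← LinearMap.finrank_maxGenEigenspace_eq,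
    Module.End.maxGenEigenspace_eq_eigenspace_of_dual (dotProductBilin ℝ ℝ w), hspan,
    finrank_span_singleton hu0]
  · intro x
    simp [dotProduct_mulVec, hwA]
  · rw [hspan]
    rintro _ hx hwx
    obtain ⟨c, rfl⟩ := Submodule.mem_span_singleton.1 hx
    rw [dotProductBilin_apply_apply, dotProduct_smul, smul_eq_mul, mul_eq_zero] at hwx
    rw [hwx.resolve_right hwu.ne', zero_smul]

end Nonneg

end Matrix

/-- Perron–Frobenius theorem for irreducible non-negative matrices: the
spectral radius `ρ` is a positive, simple eigenvalue admitting a strictly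
positive eigenvector. -/
theorem perron_frobenius (N : ℕ) (hN : 0 < N) (A : Matrix (Fin N) (Fin N) ℝ)
    (hnn : ∀ i j, 0 ≤ A i j)
    (hirr : ∀ i j, ∃ m : ℕ, 1 ≤ m ∧ 0 < (A ^ m) i j) :
    ∀ ρ : ℝ, ρ = sSup ((fun μ : ℂ => ‖μ‖) '' spectrum ℂ (A.map Complex.ofReal)) →
      0 < ρ ∧ ((ρ : ℂ) ∈ spectrum ℂ (A.map Complex.ofReal)) ∧
      Polynomial.rootMultiplicity ρ A.charpoly = 1 ∧
      ∃ v : Fin N → ℝ, (∀ i, 0 < v i) ∧ A.mulVec v = ρ • v := by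
  intro ρ hρ
  have : Nonempty (Fin N) := ⟨⟨0, hN⟩⟩
  have hirr' : ∀ i j, ∃ m, 0 < (A ^ m) i j := fun i j => (hirr i j).imp fun _ => And.right
  obtain ⟨r, hr, hmax⟩ := exists_mem_spectrum_forall_norm_le (A.map Complex.ofReal)
  obtain rfl : ρ = ‖r‖ := hρ.trans
    (IsGreatest.csSup_eq ⟨Set.mem_image_of_mem _ hr, Set.forall_mem_image.2 hmax⟩)
  obtain ⟨u, hu, hAu⟩ := exists_pos_eigenvector hnn hirr' hr hmax
  obtain ⟨w, hw, hAw⟩ := exists_pos_eigenvector (A := Aᵀ) (fun i j => hnn j i)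
    (fun i j => by simpa [← transpose_pow] using hirr' j i)
    (by rwa [transpose_map, spectrum_transpose]) (by rwa [transpose_map, spectrum_transpose])
  rw [mulVec_transpose] at hAw
  exact ⟨pos_of_forall_pos_of_mulVec_eq_smul hnn hirr hu hAu,
    ofReal_mem_spectrum_map (Function.ne_iff.2 ⟨⟨0, hN⟩, (hu _).ne'⟩) hAu,
    rootMultiplicity_charpoly_eq_one hnn hirr' hu hAu hw hAw, u, hu, hAu⟩
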